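/- arXiv:1203.6210 — 3 statements merged into one kernel-verified Lean document; each statement's English description precedes it below -/
import Mathlib

section
/- Let G be a finite group, H ≤ G, and S an NRT of H in G with induced operation ∘. Then (S, ∘) is a group isomorphic to the quotient structure if and only if for all x, y ∈ S, xy(x ∘ y)⁻¹ ∈ Core_G(H); in particular, if H is normal in G, every NRT of H in G is a group under ∘ isomorphic to G/H. -/
/-!
Write `a ≡ b` for `a * b⁻¹ ∈ H`, so that `x ∘ y` is the element of `S` with `x ∘ y ≡ x * y`.
Since `≡` is compatible with right multiplication, `(x ∘ y) ∘ z ≡ x * y * z` always holds,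
while `x ∘ (y ∘ z) ≡ x * y * z` holds iff `x` conjugates `c = (y ∘ z) * (y * z)⁻¹` into `H`.
As every element of `G` lies in `H * s` for some `s ∈ S`, conjugating `c` into `H` by all
`s ∈ S` is the same as `c ∈ Core_G(H)`. So associativity is equivalent to the core condition,
and associativity alone already makes the elements of `S ∩ H x⁻¹` two-sided inverses.
-/

/-- A normalized right transversal (NRT) of `H` in `G`. -/
def IsNRT {G : Type*} [Group G] (H : Subgroup G) (S : Set G) : Prop :=
  (1 : G) ∈ S ∧ ∀ g : G, ∃! s, s ∈ S ∧ s * g⁻¹ ∈ H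

namespace IsNRT

variable {G : Type*} [Group G] {H : Subgroup G} {S : Set G}

theorem exists_mul_inv_mem (hS : IsNRT H S) (g : G) : ∃ s ∈ S, s * g⁻¹ ∈ H :=
  (hS.2 g).exists

theorem eq_of_mul_inv_mem (hS : IsNRT H S) {g s t : G} (hs : s ∈ S) (ht : t ∈ S)
    (hsg : s * g⁻¹ ∈ H) (htg : t * g⁻¹ ∈ H) : s = t :=
  (hS.2 g).unique ⟨hs, hsg⟩ ⟨ht, htg⟩

theorem mem_normalCore_iff (hS : IsNRT H S) {c : G} :
    c ∈ H.normalCore ↔ ∀ s ∈ S, s * c * s⁻¹ ∈ H := by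
  refine ⟨fun hc s _ => hc s, fun hc g => ?_⟩
  obtain ⟨s, hs, hsg⟩ := hS.exists_mul_inv_mem g
  have e : g * c * g⁻¹ = (s * g⁻¹)⁻¹ * (s * c * s⁻¹) * (s * g⁻¹) := by group
  rw [e]
  exact H.mul_mem (H.mul_mem (H.inv_mem hsg) (hc s hs)) hsg

theorem bijOn_mk [H.Normal] (hS : IsNRT H S) :
    Set.BijOn (QuotientGroup.mk (s := H)) S Set.univ := by
  refine ⟨fun _ _ => Set.mem_univ _, fun x hx y hy hxy => ?_, fun q _ => ?_⟩
  · rw [QuotientGroup.eq_iff_div_mem, div_eq_mul_inv] at hxy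
    exact hS.eq_of_mul_inv_mem hx hy hxy (by simp)
  · obtain ⟨g, rfl⟩ := QuotientGroup.mk_surjective q
    obtain ⟨s, hs, hsg⟩ := hS.exists_mul_inv_mem g
    exact ⟨s, hs, QuotientGroup.eq_iff_div_mem.2 (by rwa [div_eq_mul_inv])⟩

variable (hS : IsNRT H S) {op : G → G → G}
  (hop : ∀ x ∈ S, ∀ y ∈ S, op x y ∈ S ∧ op x y * (x * y)⁻¹ ∈ H)
include hS hop

theorem op_eq_iff {x y s : G} (hx : x ∈ S) (hy : y ∈ S) (hs : s ∈ S) :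
    op x y = s ↔ s * (x * y)⁻¹ ∈ H :=
  ⟨fun h => h ▸ (hop x hx y hy).2,
    fun h => hS.eq_of_mul_inv_mem (hop x hx y hy).1 hs (hop x hx y hy).2 h⟩

theorem op_one_right {x : G} (hx : x ∈ S) : op x 1 = x :=
  (op_eq_iff hS hop hx hS.1 hx).2 (by simp)

theorem op_eq_one_iff {x y : G} (hx : x ∈ S) (hy : y ∈ S) : op x y = 1 ↔ x * y ∈ H := by
  rw [op_eq_iff hS hop hx hy hS.1, one_mul, inv_mem_iff]

theorem op_assoc_iff {x y z : G} (hx : x ∈ S) (hy : y ∈ S) (hz : z ∈ S) :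
    op (op x y) z = op x (op y z) ↔ x * (op y z * (y * z)⁻¹) * x⁻¹ ∈ H := by
  obtain ⟨hxy, hxyH⟩ := hop x hx y hy
  obtain ⟨hyz, -⟩ := hop y hy z hz
  obtain ⟨hxyz, hxyzH⟩ := hop x hx (op y z) hyz
  set s := op x (op y z)
  have left : s * (op x y * z)⁻¹ = s * (x * y * z)⁻¹ * (op x y * (x * y)⁻¹)⁻¹ := by group
  have right : s * (x * y * z)⁻¹ = s * (x * op y z)⁻¹ * (x * (op y z * (y * z)⁻¹) * x⁻¹) := by
    group
  rw [op_eq_iff hS hop hxy hz hxyz, left, H.mul_mem_cancel_right (H.inv_mem hxyH), right,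
    H.mul_mem_cancel_left hxyzH]

theorem op_assoc_iff_forall_mem_normalCore :
    (∀ x ∈ S, ∀ y ∈ S, ∀ z ∈ S, op (op x y) z = op x (op y z)) ↔
      ∀ x ∈ S, ∀ y ∈ S, x * y * (op x y)⁻¹ ∈ H.normalCore := by
  have inv_eq (y z : G) : (y * z * (op y z)⁻¹)⁻¹ = op y z * (y * z)⁻¹ := by group
  simp only [← inv_mem_iff (x := _ * _ * (op _ _)⁻¹), inv_eq, hS.mem_normalCore_iff]
  constructor
  · intro h y hy z hz x hx
    exact (op_assoc_iff hS hop hx hy hz).1 (h x hx y hy z hz)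
  · intro h x hx y hy z hz
    exact (op_assoc_iff hS hop hx hy hz).2 (h y hy z hz x hx)

theorem exists_op_inverse_of_assoc
    (hassoc : ∀ x ∈ S, ∀ y ∈ S, ∀ z ∈ S, op (op x y) z = op x (op y z)) :
    ∀ x ∈ S, ∃ x' ∈ S, op x x' = 1 ∧ op x' x = 1 := by
  intro x hx
  obtain ⟨x', hx', hx'x⟩ := hS.exists_mul_inv_mem x⁻¹
  rw [inv_inv] at hx'x
  have left_inv : op x' x = 1 := (op_eq_one_iff hS hop hx' hx).2 hx'x
  refine ⟨x', hx', ?_, left_inv⟩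
  obtain ⟨he, -⟩ := hop x hx x' hx'
  -- `(x ∘ x') ∘ x = x ∘ (x' ∘ x) = x` together with `(x ∘ x') ∘ x ≡ (x ∘ x') * x`
  have hex : op (op x x') x = x := by rw [hassoc x hx x' hx' x hx, left_inv, op_one_right hS hop hx]
  have hinv : (op x x')⁻¹ ∈ H := by simpa using (op_eq_iff hS hop he hx hx).1 hex
  exact hS.eq_of_mul_inv_mem (g := 1) he hS.1 (by simpa using hinv) (by simp)

end IsNRT

theorem stmt2_general {G : Type*} [Group G] (H : Subgroup G) (S : Set G)
    (hS : IsNRT H S) (op : G → G → G)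
    (hop : ∀ x ∈ S, ∀ y ∈ S, op x y ∈ S ∧ op x y * (x * y)⁻¹ ∈ H) :
    -- `(S, ∘)` is a group (associative with two-sided inverses) precisely when
    -- all the elements `x * y * (x ∘ y)⁻¹` lie in the core of `H`
    (((∀ x ∈ S, ∀ y ∈ S, ∀ z ∈ S, op (op x y) z = op x (op y z)) ∧
        (∀ x ∈ S, ∃ x' ∈ S, op x x' = 1 ∧ op x' x = 1)) ↔
      (∀ x ∈ S, ∀ y ∈ S, x * y * (op x y)⁻¹ ∈ H.normalCore)) ∧
    -- in particular, if `H` is normal, every NRT is a group under `∘`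
    -- isomorphic to `G/H` via the quotient map (which on `S` is a bijection
    -- sending `x ∘ y` to the product `mk x * mk y = mk (x * y)`)
    (H.Normal →
      ((∀ x ∈ S, ∀ y ∈ S, ∀ z ∈ S, op (op x y) z = op x (op y z)) ∧
        (∀ x ∈ S, ∃ x' ∈ S, op x x' = 1 ∧ op x' x = 1) ∧
        Set.BijOn (QuotientGroup.mk (s := H)) S Set.univ ∧
        (∀ x ∈ S, ∀ y ∈ S,
          (QuotientGroup.mk (op x y) : G ⧸ H) = QuotientGroup.mk (x * y)))) := by
  have assoc_iff := hS.op_assoc_iff_forall_mem_normalCore hop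
  have inverses := hS.exists_op_inverse_of_assoc hop
  refine ⟨⟨fun h => assoc_iff.1 h.1, fun h => ⟨assoc_iff.2 h, inverses (assoc_iff.2 h)⟩⟩,
    fun hN => ?_⟩
  have core : ∀ x ∈ S, ∀ y ∈ S, x * y * (op x y)⁻¹ ∈ H.normalCore := by
    intro x hx y hy
    rw [H.normalCore_eq_self, ← inv_mem_iff]
    simpa using (hop x hx y hy).2
  refine ⟨assoc_iff.2 core, inverses (assoc_iff.2 core), hS.bijOn_mk, fun x hx y hy => ?_⟩
  rw [QuotientGroup.eq_iff_div_mem, div_eq_mul_inv]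
  exact (hop x hx y hy).2

theorem stmt2 {G : Type*} [Group G] [Fintype G] (H : Subgroup G) (S : Set G)
    (hS : IsNRT H S) (op : G → G → G)
    (hop : ∀ x ∈ S, ∀ y ∈ S, op x y ∈ S ∧ op x y * (x * y)⁻¹ ∈ H) :
    -- `(S, ∘)` is a group (associative with two-sided inverses) precisely when
    -- all the elements `x * y * (x ∘ y)⁻¹` lie in the core of `H`
    (((∀ x ∈ S, ∀ y ∈ S, ∀ z ∈ S, op (op x y) z = op x (op y z)) ∧
        (∀ x ∈ S, ∃ x' ∈ S, op x x' = 1 ∧ op x' x = 1)) ↔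
      (∀ x ∈ S, ∀ y ∈ S, x * y * (op x y)⁻¹ ∈ H.normalCore)) ∧
    -- in particular, if `H` is normal, every NRT is a group under `∘`
    -- isomorphic to `G/H` via the quotient map (which on `S` is a bijection
    -- sending `x ∘ y` to the product `mk x * mk y = mk (x * y)`)
    (H.Normal →
      ((∀ x ∈ S, ∀ y ∈ S, ∀ z ∈ S, op (op x y) z = op x (op y z)) ∧
        (∀ x ∈ S, ∃ x' ∈ S, op x x' = 1 ∧ op x' x = 1) ∧
        Set.BijOn (QuotientGroup.mk (s := H)) S Set.univ ∧
        (∀ x ∈ S, ∀ y ∈ S,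
          (QuotientGroup.mk (op x y) : G ⧸ H) = QuotientGroup.mk (x * y)))) :=
  stmt2_general H S hS op hop
end

section
/- Every abelian subgroup of the symmetric group Sym(6) has order at most 9. -/
/-!
A commuting permutation is determined on a whole orbit by its value at one point, so an abelian
permutation group embeds into the product of its orbits and has order at most the product of the
orbit sizes. These sizes add up to 6, and since `n ^ 3 ≤ 3 ^ n` for every `n`, the cube of their
product is at most `3 ^ 6 = 9 ^ 3`.
-/

open MulAction

theorem Nat.pow_three_le_three_pow (n : ℕ) : n ^ 3 ≤ 3 ^ n := by
  induction n using Nat.strong_induction_on with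
  | _ n ih =>
    match n with
    | 0 | 1 | 2 | 3 => norm_num
    | k + 4 =>
      calc (k + 4) ^ 3 ≤ 3 * (k + 3) ^ 3 := by ring_nf; nlinarith
        _ ≤ 3 * 3 ^ (k + 3) := Nat.mul_le_mul_left 3 (ih (k + 3) (by omega))
        _ = 3 ^ (k + 4) := Nat.pow_succ'.symm

theorem Finset.prod_pow_three_le_three_pow_sum {ι : Type*} (s : Finset ι) (f : ι → ℕ) :
    (∏ i ∈ s, f i) ^ 3 ≤ 3 ^ ∑ i ∈ s, f i :=
  calc (∏ i ∈ s, f i) ^ 3 = ∏ i ∈ s, f i ^ 3 := (Finset.prod_pow _ _ _).symm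
    _ ≤ ∏ i ∈ s, 3 ^ f i := Finset.prod_le_prod' fun _ _ => Nat.pow_three_le_three_pow _
    _ = 3 ^ ∑ i ∈ s, f i := Finset.prod_pow_eq_pow_sum _ _ _

theorem MulAction.sum_card_orbit {G α : Type*} [Group G] [MulAction G α] [Finite α]
    [Fintype (orbitRel.Quotient G α)] :
    ∑ ω : orbitRel.Quotient G α, Nat.card (orbit G ω.out) = Nat.card α := by
  rw [← Nat.card_sigma, Nat.card_congr (selfEquivSigmaOrbits G α)]

namespace MulAction

variable {G α : Type*} [CommGroup G] [MulAction G α]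

theorem smul_eq_smul_of_mem_orbit {g g' : G} {x y : α} (h : g • x = g' • x)
    (hy : y ∈ orbit G x) : g • y = g' • y := by
  obtain ⟨k, rfl⟩ := hy
  rw [smul_comm g k x, smul_comm g' k x, h]

theorem injective_smul_orbitRel_out [FaithfulSMul G α] :
    Function.Injective fun (g : G) (ω : orbitRel.Quotient G α) =>
      (⟨g • ω.out, mem_orbit _ _⟩ : orbit G ω.out) := by
  intro g g' h
  refine eq_of_smul_eq_smul (α := α) fun y => ?_
  have hy : y ∈ orbitRel.Quotient.orbit (Quotient.mk'' y : orbitRel.Quotient G α) :=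
    mem_orbit_self y
  rw [orbitRel.Quotient.orbit_eq_orbit_out _ Quotient.out_eq'] at hy
  exact smul_eq_smul_of_mem_orbit (congrArg Subtype.val (congrFun h _)) hy

theorem card_le_prod_card_orbit [FaithfulSMul G α] [Finite α]
    [Fintype (orbitRel.Quotient G α)] :
    Nat.card G ≤ ∏ ω : orbitRel.Quotient G α, Nat.card (orbit G ω.out) := by
  rw [← Nat.card_pi]
  exact Nat.card_le_card_of_injective _ (injective_smul_orbitRel_out (α := α))

end MulAction

theorem stmt6 (H : Subgroup (Equiv.Perm (Fin 6)))
    (hab : ∀ a ∈ H, ∀ b ∈ H, a * b = b * a) :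
    Nat.card H ≤ 9 := by
  classical
  let _ : CommGroup H := { H.toGroup with mul_comm := fun a b => Subtype.ext (hab a a.2 b b.2) }
  have hsum : ∑ ω : orbitRel.Quotient H (Fin 6), Nat.card (orbit H ω.out) = 6 := by
    rw [sum_card_orbit, Nat.card_fin]
  have hcube : (∏ ω : orbitRel.Quotient H (Fin 6), Nat.card (orbit H ω.out)) ^ 3 ≤ 9 ^ 3 :=
    calc _ ≤ 3 ^ ∑ ω : orbitRel.Quotient H (Fin 6), Nat.card (orbit H ω.out) :=
          Finset.prod_pow_three_le_three_pow_sum _ _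
      _ = 9 ^ 3 := by rw [hsum]; norm_num
  exact card_le_prod_card_orbit.trans ((Nat.pow_le_pow_iff_left (by norm_num)).1 hcube)
end

section
/- Let G be a finite group, H ≤ G with Core_G(H) = {1}, H abelian, H not normal in G, and N ⊴ G with H ≤ N and [N : H] = 2 and [G : N] = 2. Then G ≅ D8 and |H| = 2. -/
/-!
As `[N : H] = 2`, `N` normalises `H`; for `t ∉ N` every element of `G` lies in `N` or in `N t`,
so `H ∩ tHt⁻¹` lies in every conjugate of `H`, i.e. in the trivial core. Thus `tHt⁻¹ ≤ N` meets
`H` trivially and `|H| = |tHt⁻¹| ≤ [N : H] = 2`; as `H` is not normal, `|H| = 2` and `|G| = 8`.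
Some involution `h ∈ H` is not central, so `G` is non-abelian of order 8 and has an element `r`
of order 4. The unique involution `r²` of the normal subgroup `⟨r⟩` is central, so `h ∉ ⟨r⟩`,
and `h r h⁻¹ ∈ {r, r⁻¹}` must be `r⁻¹` since `h` is not central. These are the dihedral
relations, and comparing orders turns the induced map `DihedralGroup 4 → G` into an isomorphism.
-/

open Subgroup

section

variable {G : Type*} [Group G]

namespace Subgroup

theorem normal_of_le_center {H : Subgroup G} (hH : H ≤ center G) : H.Normal where
  conj_mem x hx g := by rw [mem_center_iff.mp (hH hx) g, mul_inv_cancel_right]; exact hx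

theorem inf_map_conj_le_normalCore {H N : Subgroup G} (hN : N.index = 2)
    (hNH : N ≤ normalizer (H : Set G)) {t : G} (ht : t ∉ N) :
    H ⊓ H.map (MulAut.conj t).toMonoidHom ≤ H.normalCore := by
  rintro _ ⟨hxH, y, hyH, rfl⟩ g
  by_cases hg : g ∈ N
  · exact (mem_normalizer_iff.mp (hNH hg) _).mp hxH
  · have hgt : g * t ∈ N := (mul_mem_iff_of_index_two hN).mpr (iff_of_false hg ht)
    simpa [MulAut.conj_apply, mul_assoc] using (mem_normalizer_iff.mp (hNH hgt) y).mp hyH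

theorem card_le_relIndex_of_normalCore_eq_bot [Finite G] {H N : Subgroup G} [N.Normal]
    (hN : N.index = 2) (hHN : H ≤ N) (hNH : N ≤ normalizer (H : Set G))
    (hcore : H.normalCore = ⊥) : Nat.card H ≤ H.relIndex N := by
  obtain ⟨t, ht⟩ : ∃ t, t ∉ N := by
    by_contra! hall
    rw [(eq_top_iff' N).mpr hall, index_top] at hN
    omega
  set K := H.map (MulAut.conj t).toMonoidHom
  have hKN : K ≤ N := by
    rintro _ ⟨y, hy, rfl⟩
    exact ‹N.Normal›.conj_mem y (hHN hy) t
  have hHK : H ⊓ K = ⊥ := le_bot_iff.mp (hcore ▸ inf_map_conj_le_normalCore hN hNH ht)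
  calc Nat.card H = Nat.card K := (card_map_of_injective (MulAut.conj t).injective).symm
    _ = (H ⊓ K).relIndex K := by rw [hHK, relIndex_bot_left]
    _ = H.relIndex K := inf_relIndex_right H K
    _ ≤ H.relIndex N := relIndex_le_of_le_right hKN (H.subgroupOf N).index_ne_zero_of_finite

theorem mem_center_of_forall_commute {P : Subgroup G} (hP : P.index = 2) {h : G} (hhP : h ∉ P)
    (hcomm : ∀ p ∈ P, Commute h p) : h ∈ center G := by
  refine mem_center_iff.mpr fun g ↦ (?_ : Commute h g).symm.eq
  by_cases hg : g ∈ P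
  · exact hcomm g hg
  · have hhg : h * g ∈ P := (mul_mem_iff_of_index_two hP).mpr (iff_of_false hhP hg)
    simpa using (Commute.refl h).inv_right.mul_right (hcomm _ hhg)

end Subgroup

theorem orderOf_conj (g x : G) : orderOf (g * x * g⁻¹) = orderOf x := by
  simpa [MulAut.conj_apply] using MulEquiv.orderOf_eq (MulAut.conj g) x

section OrderFour

variable {r x : G}

theorem mem_zpowers_of_orderOf_eq_four (hr : orderOf r = 4) (hx : x ∈ zpowers r) :
    x = 1 ∨ x = r ∨ x = r ^ 2 ∨ x = r⁻¹ := by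
  obtain ⟨k, rfl⟩ := mem_zpowers_iff.mp hx
  have hr3 : r ^ 3 = r⁻¹ :=
    eq_inv_of_mul_eq_one_left (by rw [← pow_succ, ← pow_orderOf_eq_one r, hr])
  rw [← zpow_mod_orderOf, hr]
  have h0 : 0 ≤ k % (4 : ℕ) := Int.emod_nonneg k (by norm_num)
  have h4 : k % (4 : ℕ) < 4 := Int.emod_lt_of_pos k (by norm_num)
  interval_cases k % (4 : ℕ) <;> simp [hr3]

theorem eq_sq_of_mem_zpowers_of_orderOf_eq_two (hr : orderOf r = 4) (hx : x ∈ zpowers r)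
    (hx2 : orderOf x = 2) : x = r ^ 2 := by
  rcases mem_zpowers_of_orderOf_eq_four hr hx with rfl | rfl | rfl | rfl <;> simp_all

theorem eq_or_eq_inv_of_mem_zpowers_of_orderOf_eq_four (hr : orderOf r = 4)
    (hx : x ∈ zpowers r) (hx4 : orderOf x = 4) : x = r ∨ x = r⁻¹ := by
  have hr2 : orderOf (r ^ 2) = 2 := by rw [orderOf_pow' r two_ne_zero, hr]; rfl
  rcases mem_zpowers_of_orderOf_eq_four hr hx with rfl | rfl | rfl | rfl <;> simp_all

end OrderFour

theorem exists_orderOf_eq_four_of_card_eq_eight [Finite G] (hG : Nat.card G = 8)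
    (hG' : ¬ IsMulCommutative G) : ∃ r : G, orderOf r = 4 := by
  by_contra! h4
  by_cases h8 : ∃ g : G, orderOf g = 8
  · obtain ⟨g, hg⟩ := h8
    have := isCyclic_of_orderOf_eq_card g (hg.trans hG.symm)
    exact hG' inferInstance
  · push Not at h8
    have hexp : Monoid.exponent G ∣ 2 := Monoid.exponent_dvd_of_forall_pow_eq_one fun g ↦ by
      rw [← orderOf_dvd_iff_pow_eq_one]
      have hdvd : orderOf g ∣ 8 := hG ▸ orderOf_dvd_natCard g
      have hle : orderOf g ≤ 8 := Nat.le_of_dvd (by norm_num) hdvd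
      have h4g := h4 g
      have h8g := h8 g
      interval_cases orderOf g <;> simp_all
    have hne : Monoid.exponent G ≠ 1 := fun h ↦ by
      have := Monoid.exp_eq_one_iff.mp h
      rw [Nat.card_of_subsingleton (1 : G)] at hG
      omega
    have h2 : Monoid.exponent G = 2 := by
      rcases (Nat.dvd_prime Nat.prime_two).mp hexp with h | h
      exacts [absurd h hne, h]
    exact hG' (IsMulCommutative.of_comm (mul_comm_of_exponent_two h2))

theorem exists_dihedral_generators [Finite G] (hG : Nat.card G = 8) {h : G} (hh : orderOf h = 2)
    (hcen : h ∉ center G) : ∃ r : G, orderOf r = 4 ∧ h ∉ zpowers r ∧ h * r * h⁻¹ = r⁻¹ := by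
  have hG' : ¬ IsMulCommutative G := fun _ ↦ hcen (by simp [center_eq_top])
  obtain ⟨r, hr⟩ := exists_orderOf_eq_four_of_card_eq_eight hG hG'
  have hP : (zpowers r).index = 2 := by
    have := card_mul_index (zpowers r)
    rw [Nat.card_zpowers, hr, hG] at this
    omega
  have hPn : (zpowers r).Normal := normal_of_index_eq_two hP
  have hhP : h ∉ zpowers r := fun hhP ↦ hcen <| mem_center_iff.mpr fun g ↦ by
    have hhr := eq_sq_of_mem_zpowers_of_orderOf_eq_two hr hhP hh
    have hghr := eq_sq_of_mem_zpowers_of_orderOf_eq_two hr (hPn.conj_mem h hhP g)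
      ((orderOf_conj g h).trans hh)
    exact mul_inv_eq_iff_eq_mul.mp (hghr.trans hhr.symm)
  refine ⟨r, hr, hhP, ?_⟩
  rcases eq_or_eq_inv_of_mem_zpowers_of_orderOf_eq_four hr
    (hPn.conj_mem r (mem_zpowers r) h) ((orderOf_conj h r).trans hr) with hcomm | hinv
  · refine absurd (mem_center_of_forall_commute hP hhP fun p hp ↦ ?_) hcen
    obtain ⟨k, rfl⟩ := mem_zpowers_iff.mp hp
    exact Commute.zpow_right (mul_inv_eq_iff_eq_mul.mp hcomm) k
  · exact hinv

section RootOfUnity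

variable {n : ℕ} [NeZero n] {a : G}

theorem pow_val_add (ha : a ^ n = 1) (i j : ZMod n) :
    a ^ (i + j).val = a ^ i.val * a ^ j.val := by
  rw [ZMod.val_add, ← pow_eq_pow_mod _ ha, pow_add]

theorem pow_val_neg (ha : a ^ n = 1) (i : ZMod n) : a ^ (-i).val = (a ^ i.val)⁻¹ :=
  eq_inv_of_mul_eq_one_left (by rw [← pow_val_add ha, neg_add_cancel, ZMod.val_zero, pow_zero])

end RootOfUnity

namespace DihedralGroup

variable {n : ℕ} [NeZero n]

def lift {a b : G} (ha : a ^ n = 1) (hb : b ^ 2 = 1) (hab : b * a * b⁻¹ = a⁻¹) :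
    DihedralGroup n →* G where
  toFun
    | .r i => a ^ i.val
    | .sr i => b * a ^ i.val
  map_one' := by simp [one_def, -r_zero]
  map_mul' := by
    have hbb : b * b = 1 := by rw [← sq, hb]
    have hswap (k : ℕ) : a ^ k * b = b * (a ^ k)⁻¹ := by
      rw [← inv_pow, ← hab, conj_pow, inv_eq_of_mul_eq_one_left hbb, ← mul_assoc b (b * a ^ k),
        ← mul_assoc b b, hbb, one_mul]
    rintro (i | i) (j | j)
    · exact pow_val_add ha i j
    · simp only [r_mul_sr, sub_eq_neg_add, pow_val_add ha, pow_val_neg ha, ← mul_assoc, hswap]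
    · simp only [sr_mul_r, pow_val_add ha, mul_assoc]
    · simp only [sr_mul_sr, sub_eq_neg_add, pow_val_add ha, pow_val_neg ha]
      rw [← mul_assoc, mul_assoc b, hswap, ← mul_assoc, hbb, one_mul]

theorem nonempty_mulEquiv_of_generators [Finite G] {a b : G} (ha : orderOf a = n)
    (hb : b ^ 2 = 1) (hab : b * a * b⁻¹ = a⁻¹) (hbA : b ∉ zpowers a) (hG : Nat.card G = 2 * n) :
    Nonempty (DihedralGroup n ≃* G) := by
  set f : DihedralGroup n →* G := lift (by rw [← ha, pow_orderOf_eq_one]) hb hab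
  have hinj : Function.Injective f := (injective_iff_map_eq_one f).mpr <| by
    rintro (i | i) hi
    · have hdvd : orderOf a ∣ i.val := orderOf_dvd_of_pow_eq_one hi
      rw [ha] at hdvd
      rw [(ZMod.val_eq_zero i).mp (Nat.eq_zero_of_dvd_of_lt hdvd (ZMod.val_lt i)), r_zero]
    · exact absurd (eq_inv_of_mul_eq_one_left hi ▸ inv_mem (pow_mem (mem_zpowers a) _)) hbA
  exact ⟨.ofBijective f (hinj.bijective_of_nat_card_le (by rw [nat_card, hG]))⟩

end DihedralGroup

end

theorem stmt17_general {G : Type*} [Group G] [Fintype G]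
    (H N : Subgroup G) [N.Normal]
    (hcore : H.normalCore = ⊥)
    (hnn : ¬ H.Normal)
    (hHN : H ≤ N)
    (hNH : H.relIndex N = 2)
    (hGN : N.index = 2) :
    Nonempty (G ≃* DihedralGroup 4) ∧ Nat.card H = 2 := by
  have hNH' : N ≤ normalizer (H : Set G) :=
    (normal_subgroupOf_iff_le_normalizer hHN).mp (normal_of_index_eq_two hNH)
  have hH2 : Nat.card H = 2 := by
    refine le_antisymm (hNH ▸ card_le_relIndex_of_normalCore_eq_bot hGN hHN hNH' hcore) ?_
    exact H.one_lt_card_iff_ne_bot.mpr fun hbot ↦ hnn (hbot ▸ inferInstance)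
  have hG8 : Nat.card G = 8 := by
    rw [← card_mul_index H, ← relIndex_mul_index hHN, hNH, hGN, hH2]
  obtain ⟨h, hhH, hcen⟩ : ∃ h ∈ H, h ∉ center G := by
    by_contra! hle
    exact hnn (normal_of_le_center hle)
  have hh : orderOf h = 2 := orderOf_eq_prime
    (orderOf_dvd_iff_pow_eq_one.mp (hH2 ▸ orderOf_dvd_natCard H hhH))
    fun h1 ↦ hcen (h1 ▸ one_mem _)
  obtain ⟨r, hr, hhr, hconj⟩ := exists_dihedral_generators hG8 hh hcen
  obtain ⟨e⟩ := DihedralGroup.nonempty_mulEquiv_of_generators hr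
    (hh ▸ pow_orderOf_eq_one h) hconj hhr (by rw [hG8])
  exact ⟨⟨e.symm⟩, hH2⟩

theorem stmt17 {G : Type*} [Group G] [Fintype G]
    (H N : Subgroup G) [N.Normal]
    (hcore : H.normalCore = ⊥)
    (hab : ∀ a ∈ H, ∀ b ∈ H, a * b = b * a)
    (hnn : ¬ H.Normal)
    (hHN : H ≤ N)
    (hNH : H.relIndex N = 2)
    (hGN : N.index = 2) :
    Nonempty (G ≃* DihedralGroup 4) ∧ Nat.card H = 2 :=
  stmt17_general H N hcore hnn hHN hNH hGN
end
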